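/- arXiv:2307.16066 — 3 statements merged into one kernel-verified Lean document; each statement's English description precedes it below -/
import Mathlib

section
/- Let U : V × V → ℝ be a symmetric nonnegative ultrametric on a finite set V (satisfying U(u,v) ≤ max(U(u,w),U(v,w)) for all distinct triples), let l : V → ℝ≥0 and h ≥ 0 with l(u) ≤ h for all u. Define S_U(u,v) = min(h, max(U(u,v), l(u), l(v))). Then S_U is an ultrametric and satisfies max(l(u), l(v)) ≤ S_U(u,v) ≤ h for all distinct u, v. -/
def squeeze {V : Type*} (l : V → ℝ) (h : ℝ) (A : V → V → ℝ) : V → V → ℝ :=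
  fun u v => min h (max (A u v) (max (l u) (l v)))

theorem squeezed_is_constrained_ultrametric {V : Type*} [Fintype V]
    (U : V → V → ℝ)
    (hsym : ∀ u v, U u v = U v u)
    (hnonneg : ∀ u v, 0 ≤ U u v)
    (hultra : ∀ u v w : V, u ≠ v → u ≠ w → v ≠ w → U u v ≤ max (U u w) (U v w))
    (l : V → ℝ) (h : ℝ) (hlnn : ∀ u, 0 ≤ l u) (hlh : ∀ u, l u ≤ h) (hh : 0 ≤ h) :
    (∀ u v w : V, u ≠ v → u ≠ w → v ≠ w →
        squeeze l h U u v ≤ max (squeeze l h U u w) (squeeze l h U v w)) ∧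
    (∀ u v : V, u ≠ v →
        max (l u) (l v) ≤ squeeze l h U u v ∧ squeeze l h U u v ≤ h) := by
  constructor
  · intro u v w huv huw hvw
    have key : max (U u v) (max (l u) (l v)) ≤
        max (max (U u w) (max (l u) (l w))) (max (U v w) (max (l v) (l w))) := by
      apply max_le
      · exact (hultra u v w huv huw hvw).trans
          (max_le_max (le_max_left _ _) (le_max_left _ _))
      · apply max_le
        · exact le_max_of_le_left (le_max_of_le_right (le_max_left _ _))
        · exact le_max_of_le_right (le_max_of_le_right (le_max_left _ _))
    simp only [squeeze, ← min_max_distrib_left]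
    exact min_le_min le_rfl key
  · intro u v _
    refine ⟨le_min (max_le (hlh u) (hlh v)) (le_max_right _ _), min_le_left _ _⟩
end

section
/- Let V be a finite set, D a symmetric distance matrix, l : V → ℝ, h ∈ ℝ with l(u) ≤ h, and define squeezing S_X(u,v) = min(h, max(X(u,v), l(u), l(v))). Let OPT be a constrained matrix (max(l(u),l(v)) ≤ OPT(u,v) ≤ h for all distinct u,v), let ρ ≥ 1, and suppose U is a matrix satisfying ‖S_D − U‖₀ ≤ ρ · ‖S_D − OPT‖₀. Then ‖D − S_U‖₀ ≤ 2ρ · ‖D − OPT‖₀. -/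
open Classical in
noncomputable def L0cost {V : Type*} [Fintype V] [LinearOrder V] (A B : V → V → ℝ) : ℕ :=
  ((Finset.univ : Finset (V × V)).filter fun p => p.1 < p.2 ∧ A p.1 p.2 ≠ B p.1 p.2).card

open Classical in
lemma L0cost_mono {V : Type*} [Fintype V] [LinearOrder V] {A B C E : V → V → ℝ}
    (hp : ∀ u v, u < v → A u v ≠ B u v → C u v ≠ E u v) :
    L0cost A B ≤ L0cost C E := by
  apply Finset.card_le_card
  rintro ⟨u, v⟩ hmem
  simp only [Finset.mem_filter, Finset.mem_univ, true_and] at hmem ⊢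
  exact ⟨hmem.1, hp u v hmem.1 hmem.2⟩

open Classical in
lemma L0cost_triangle {V : Type*} [Fintype V] [LinearOrder V] (A B C : V → V → ℝ) :
    L0cost A C ≤ L0cost A B + L0cost B C := by
  classical
  have hsub : ((Finset.univ : Finset (V × V)).filter
      fun p => p.1 < p.2 ∧ A p.1 p.2 ≠ C p.1 p.2) ⊆
      ((Finset.univ : Finset (V × V)).filter fun p => p.1 < p.2 ∧ A p.1 p.2 ≠ B p.1 p.2) ∪
      ((Finset.univ : Finset (V × V)).filter fun p => p.1 < p.2 ∧ B p.1 p.2 ≠ C p.1 p.2) := by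
    rintro ⟨u, v⟩ hp
    simp only [Finset.mem_filter, Finset.mem_union, Finset.mem_univ, true_and] at hp ⊢
    obtain ⟨h1, h2⟩ := hp
    by_cases hAB : A u v = B u v
    · exact Or.inr ⟨h1, fun hBC => h2 (hAB.trans hBC)⟩
    · exact Or.inl ⟨h1, hAB⟩
  calc L0cost A C ≤ _ := Finset.card_le_card hsub
    _ ≤ L0cost A B + L0cost B C := Finset.card_union_le _ _

theorem constrained_from_unconstrained {V : Type*} [Fintype V] [LinearOrder V]
    (D OPT U : V → V → ℝ) (l : V → ℝ) (h : ℝ) (hl : ∀ u, l u ≤ h)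
    (hDsym : ∀ u v, D u v = D v u) (hOPTsym : ∀ u v, OPT u v = OPT v u)
    (hUsym : ∀ u v, U u v = U v u)
    (hcon : ∀ u v : V, u ≠ v → max (l u) (l v) ≤ OPT u v ∧ OPT u v ≤ h)
    (ρ : ℝ) (hρ : 1 ≤ ρ)
    (hU : (L0cost (squeeze l h D) U : ℝ) ≤ ρ * (L0cost (squeeze l h D) OPT : ℝ)) :
    (L0cost D (squeeze l h U) : ℝ) ≤ 2 * ρ * (L0cost D OPT : ℝ) := by
  set SD := squeeze l h D with hSDdef
  set SU := squeeze l h U with hSUdef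
  -- squeeze is determined pointwise; idempotence
  have hidem : ∀ u v, squeeze l h SD u v = SD u v := by
    intro u v
    simp only [hSDdef, squeeze]
    set m := max (l u) (l v) with hm
    have hmh : m ≤ h := max_le (hl u) (hl v)
    have h1 : m ≤ min h (max (D u v) m) := le_min hmh (le_max_right _ _)
    rw [max_eq_left h1, min_eq_right (min_le_left _ _)]
  -- squeeze fixes OPT (on distinct pairs)
  have hfix : ∀ u v, u ≠ v → squeeze l h OPT u v = OPT u v := by
    intro u v huv
    obtain ⟨h1, h2⟩ := hcon u v huv
    simp only [squeeze]
    rw [max_eq_left h1, min_eq_right h2]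
  -- ‖D - S_D‖ ≤ ‖D - OPT‖
  have hA : L0cost D SD ≤ L0cost D OPT := by
    apply L0cost_mono
    intro u v huv hne
    intro heq
    apply hne
    rw [hSDdef]
    have : squeeze l h D u v = squeeze l h OPT u v := by
      simp only [squeeze, heq]
    rw [this, hfix u v (ne_of_lt huv), ← heq]
  -- ‖S_D - OPT‖ ≤ ‖D - OPT‖
  have hB : L0cost SD OPT ≤ L0cost D OPT := by
    apply L0cost_mono
    intro u v huv hne
    intro heq
    apply hne
    rw [hSDdef]
    have : squeeze l h D u v = squeeze l h OPT u v := by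
      simp only [squeeze, heq]
    rw [this, hfix u v (ne_of_lt huv), ← heq]
  -- ‖S_D - S_U‖ ≤ ‖S_D - U‖
  have hC : L0cost SD SU ≤ L0cost SD U := by
    apply L0cost_mono
    intro u v huv hne
    intro heq
    apply hne
    rw [hSUdef]
    have : squeeze l h U u v = squeeze l h SD u v := by
      simp only [squeeze, heq]
    rw [this, hidem u v]
  have htri : L0cost D SU ≤ L0cost D SD + L0cost SD SU := L0cost_triangle D SD SU
  have hDOPT0 : (0:ℝ) ≤ (L0cost D OPT : ℝ) := Nat.cast_nonneg _
  have hDSD : (L0cost D SD : ℝ) ≤ ρ * (L0cost D OPT : ℝ) := by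
    calc (L0cost D SD : ℝ) ≤ (L0cost D OPT : ℝ) := by exact_mod_cast hA
      _ = 1 * (L0cost D OPT : ℝ) := (one_mul _).symm
      _ ≤ ρ * (L0cost D OPT : ℝ) := by
          apply mul_le_mul_of_nonneg_right hρ hDOPT0
  calc (L0cost D SU : ℝ) ≤ (L0cost D SD : ℝ) + (L0cost SD SU : ℝ) := by exact_mod_cast htri
    _ ≤ ρ * (L0cost D OPT : ℝ) + (L0cost SD U : ℝ) := by
        apply add_le_add hDSD; exact_mod_cast hC
    _ ≤ ρ * (L0cost D OPT : ℝ) + ρ * (L0cost SD OPT : ℝ) := by linarith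
    _ ≤ ρ * (L0cost D OPT : ℝ) + ρ * (L0cost D OPT : ℝ) := by
        have : (L0cost SD OPT : ℝ) ≤ (L0cost D OPT : ℝ) := by exact_mod_cast hB
        have hρ0 : (0:ℝ) ≤ ρ := le_trans zero_le_one hρ
        nlinarith
    _ = 2 * ρ * (L0cost D OPT : ℝ) := by ring
end

section
/- Let D be a symmetric matrix on finite set V, α ∈ V, m = max_{u ≠ α} D(α,u), and C(u,v) = 2m − D(α,u) − D(α,v) the centroid quasimetric (with D(α,α) := 0). Suppose U is a symmetric function on pairs of distinct elements of V satisfying the ultrametric inequality U(u,v) ≤ max(U(u,w),U(v,w)) and the constraints 2m − 2D(α,u) ≤ U(u,v) ≤ 2m for all distinct u,v (interpreting the lower bound with l(α) = 2m). Then T' = U − C satisfies the triangle inequality: T'(u,v) ≤ T'(u,w) + T'(v,w) for all distinct u, v, w. -/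
theorem constrained_ultrametric_minus_centroid_is_metric {V : Type*} [Fintype V] [DecidableEq V]
    (D : V → V → ℝ) (α : V)
    (hDsym : ∀ u v, D u v = D v u) (hDnn : ∀ u v, 0 ≤ D u v)
    (hDαα : D α α = 0)
    (hne : ((Finset.univ : Finset V).erase α).Nonempty)
    (m : ℝ) (hm : m = ((Finset.univ : Finset V).erase α).sup' hne (fun u => D α u))
    (C : V → V → ℝ) (hC : ∀ u v, C u v = 2 * m - D α u - D α v)
    (U : V → V → ℝ)
    (hUsym : ∀ u v, U u v = U v u)
    (hultra : ∀ u v w : V, u ≠ v → u ≠ w → v ≠ w → U u v ≤ max (U u w) (U v w))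
    (hcon : ∀ u v : V, u ≠ v → 2 * m - 2 * D α u ≤ U u v ∧ U u v ≤ 2 * m) :
    ∀ u v w : V, u ≠ v → u ≠ w → v ≠ w →
      U u v - C u v ≤ (U u w - C u w) + (U v w - C v w) := by
  intro u v w huv huw hvw
  have h1 := hultra u v w huv huw hvw
  have h2 := (hcon w u (Ne.symm huw)).1
  have h3 := (hcon w v (Ne.symm hvw)).1
  have su := hUsym w u
  have sv := hUsym w v
  rw [hC, hC, hC]
  rcases le_total (U u w) (U v w) with h | h
  · rw [max_eq_right h] at h1; linarith
  · rw [max_eq_left h] at h1; linarith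
end
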